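/- Let T₀ ∪ K be an extension of T₀ with a set K of flat and linear clauses over Π₀ ∪ Σ, let T be a finite set of ground flat Π-terms closed under subterms containing the ground terms of K, and let M be a total model of T₀ ∪ K[T]. Then the restricted partial structure M|_T (extension functions defined only on tuples named by terms in T) is a weak partial model of T₀ ∪ K. -/

import Mathlib

open FirstOrder FirstOrder.Language

universe u v w x y

namespace PaperFOL

/-- A sentence is universal: the universal closure of a quantifier-free formula. -/
def IsUniversalSentence {L : FirstOrder.Language.{u, v}} (φ : L.Sentence) : Prop :=
  ∃ (n : ℕ) (ψ : L.BoundedFormula Empty n), ψ.IsQF ∧ φ = ψ.alls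

/-- Two theories over the same signature are co-theories iff they have the same
universal consequences. -/
def CoTheories {L : FirstOrder.Language.{u, v}} (T₁ T₂ : L.Theory) : Prop :=
  ∀ φ : L.Sentence, IsUniversalSentence φ → (T₁ ⊨ᵇ φ ↔ T₂ ⊨ᵇ φ)

/-- `T` is model complete: every embedding between models of `T` is elementary. -/
def IsModelComplete {L : FirstOrder.Language.{u, v}} (T : L.Theory) : Prop :=
  ∀ (M N : Type w) [L.Structure M] [L.Structure N], M ⊨ T → N ⊨ T →
    ∀ (f : M ↪[L] N) (k : ℕ) (φ : L.Formula (Fin k)) (x : Fin k → M),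
      φ.Realize (f ∘ x) ↔ φ.Realize x

/-- `T` allows quantifier elimination. -/
def HasQE {L : FirstOrder.Language.{u, v}} (T : L.Theory) : Prop :=
  ∀ {n : ℕ} (φ : L.BoundedFormula Empty n),
    ∃ ψ : L.BoundedFormula Empty n, ψ.IsQF ∧ T ⊨ᵇ φ.iff ψ

/-- `T` has the strong sub-amalgamation property. -/
def StrongSubAmalgamation {L : FirstOrder.Language.{u, v}} (T : L.Theory) : Prop :=
  ∀ (A M₁ M₂ : Type w) [L.Structure A] [L.Structure M₁] [L.Structure M₂],
    M₁ ⊨ T → M₂ ⊨ T →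
    ∀ (f₁ : A ↪[L] M₁) (f₂ : A ↪[L] M₂),
      ∃ (N : Theory.ModelType.{u, v, w} T) (g₁ : M₁ ↪[L] N) (g₂ : M₂ ↪[L] N),
        (∀ a, g₁ (f₁ a) = g₂ (f₂ a)) ∧
        (∀ m₁ m₂, g₁ m₁ = g₂ m₂ → ∃ a, m₁ = f₁ a ∧ m₂ = f₂ a)

end PaperFOL

namespace PaperLoc

variable {B E : FirstOrder.Language.{u, v}}

/-! ## Partial structures

A partial `(B.sum E)`-structure: total on the base signature `B`, with possibly partial
interpretations of the extension function symbols from `E`. -/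

structure PStruct (B E : FirstOrder.Language.{u, v}) (M : Type w) where
  bfun : ∀ {n : ℕ}, B.Functions n → (Fin n → M) → M
  brel : ∀ {n : ℕ}, B.Relations n → (Fin n → M) → Prop
  efun : ∀ {n : ℕ}, E.Functions n → (Fin n → M) → Option M
  erel : ∀ {n : ℕ}, E.Relations n → (Fin n → M) → Prop

/-- The total base reduct of a partial structure. -/
def PStruct.bStructure {M : Type w} (P : PStruct B E M) : B.Structure M :=
  { funMap := fun {_} f xs => P.bfun f xs
    RelMap := fun {_} r xs => P.brel r xs }

/-- The interpretation of the relation symbols of the full signature. -/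
def PStruct.relMap {M : Type w} (P : PStruct B E M) :
    ∀ {n : ℕ}, (B.sum E).Relations n → (Fin n → M) → Prop
  | _, Sum.inl r => P.brel r
  | _, Sum.inr r => P.erel r

/-- The partial structure corresponding to a total structure for the full signature. -/
def totalize {M : Type w} (S : (B.sum E).Structure M) : PStruct B E M where
  bfun := fun {_} f xs => S.funMap (Sum.inl f) xs
  brel := fun {_} r xs => S.RelMap (Sum.inl r) xs
  efun := fun {_} f xs => some (S.funMap (Sum.inr f) xs)
  erel := fun {_} r xs => S.RelMap (Sum.inr r) xs

/-- Partial evaluation of terms in a partial structure: `PRealize P v t x` holds iff the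
term `t` is defined under the valuation `v` and evaluates to `x`. -/
inductive PRealize {M : Type w} (P : PStruct B E M) {α : Type x} (v : α → M) :
    (B.sum E).Term α → M → Prop
  | var (a : α) : PRealize P v (Term.var a) (v a)
  | bfunc {n : ℕ} (f : B.Functions n) (ts : Fin n → (B.sum E).Term α) (xs : Fin n → M) :
      (∀ i, PRealize P v (ts i) (xs i)) →
      PRealize P v (Term.func (Sum.inl f) ts) (P.bfun f xs)
  | efunc {n : ℕ} (f : E.Functions n) (ts : Fin n → (B.sum E).Term α) (xs : Fin n → M) (y : M) :
      (∀ i, PRealize P v (ts i) (xs i)) → P.efun f xs = some y →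
      PRealize P v (Term.func (Sum.inr f) ts) y

/-! ## Syntax: literals and clauses -/

/-- Literals over a language `L` with (free) constants/variables from `γ`. -/
inductive Lit (L : FirstOrder.Language.{u, v}) (γ : Type w) where
  | eq (pos : Bool) (t₁ t₂ : L.Term γ)
  | rel (pos : Bool) (n : ℕ) (r : L.Relations n) (ts : Fin n → L.Term γ)

/-- A clause is a (finite) disjunction of literals. -/
abbrev Clause (L : FirstOrder.Language.{u, v}) (γ : Type w) := List (Lit L γ)

/-- The terms occurring (at the top level) in a literal. -/
def Lit.terms {L : FirstOrder.Language.{u, v}} {γ : Type x} : Lit L γ → Set (L.Term γ)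
  | .eq _ t₁ t₂ => {t₁, t₂}
  | .rel _ _ _ ts => Set.range ts

/-- Applying a substitution to a literal. -/
def Lit.subst {L : FirstOrder.Language.{u, v}} {γ : Type x} {δ : Type y} :
    Lit L γ → (γ → L.Term δ) → Lit L δ
  | .eq pos t₁ t₂, σ => .eq pos (t₁.subst σ) (t₂.subst σ)
  | .rel pos n r ts, σ => .rel pos n r (fun i => (ts i).subst σ)

/-- Renaming the variables/constants of a literal. -/
def Lit.relabel {L : FirstOrder.Language.{u, v}} {γ : Type x} {δ : Type y} :
    Lit L γ → (γ → δ) → Lit L δ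
  | .eq pos t₁ t₂, h => .eq pos (t₁.relabel h) (t₂.relabel h)
  | .rel pos n r ts, h => .rel pos n r (fun i => (ts i).relabel h)

/-- The subterm relation. -/
inductive Subterm {L : FirstOrder.Language.{u, v}} {γ : Type x} : L.Term γ → L.Term γ → Prop
  | refl (t : L.Term γ) : Subterm t t
  | func {n : ℕ} (f : L.Functions n) (ts : Fin n → L.Term γ) (i : Fin n) {t : L.Term γ} :
      Subterm t (ts i) → Subterm t (Term.func f ts)

/-- The variable/constant `c` occurs in the term `t`. -/
def VarInTerm {L : FirstOrder.Language.{u, v}} {γ : Type x} (c : γ) (t : L.Term γ) : Prop :=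
  Subterm (Term.var c) t

/-- A term is an extension term: its head symbol is an extension function symbol. -/
def IsExtTerm {γ : Type x} : (B.sum E).Term γ → Prop
  | Term.func (Sum.inr _) _ => True
  | _ => False

/-- A term contains no extension symbols (it is a pure base term). -/
inductive NoExt {γ : Type x} : (B.sum E).Term γ → Prop
  | var (a : γ) : NoExt (Term.var a)
  | func {n : ℕ} (f : B.Functions n) (ts : Fin n → (B.sum E).Term γ) :
      (∀ i, NoExt (ts i)) → NoExt (Term.func (Sum.inl f) ts)

/-- A term is quasi-flat: the arguments of every extension-headed subterm are pure base terms. -/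
def IsQuasiFlat {γ : Type x} (t : (B.sum E).Term γ) : Prop :=
  ∀ (s : (B.sum E).Term γ), Subterm s t →
    ∀ {n : ℕ} (f : E.Functions n) (ts : Fin n → (B.sum E).Term γ),
      s = Term.func (Sum.inr f) ts → ∀ i, NoExt (B := B) (E := E) (ts i)

/-- A term is flat: the arguments of every extension-headed subterm are
variables (resp. constants). -/
def IsFlatTerm {γ : Type x} (t : (B.sum E).Term γ) : Prop :=
  ∀ (s : (B.sum E).Term γ), Subterm s t →
    ∀ {n : ℕ} (f : E.Functions n) (ts : Fin n → (B.sum E).Term γ),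
      s = Term.func (Sum.inr f) ts → ∀ i, ∃ x : γ, ts i = Term.var x

/-- The term `t` occurs in the clause `D`. -/
def TermInClause {L : FirstOrder.Language.{u, v}} {γ : Type x}
    (t : L.Term γ) (D : Clause L γ) : Prop :=
  ∃ l ∈ D, ∃ s ∈ Lit.terms l, Subterm t s

/-- The term `t` occurs in some clause of the set `G`. -/
def TermInClauses {L : FirstOrder.Language.{u, v}} {γ : Type x}
    (t : L.Term γ) (G : Set (Clause L γ)) : Prop :=
  ∃ D ∈ G, TermInClause t D

/-- The variable `x` occurs in the clause `C`. -/
def VarInClause {L : FirstOrder.Language.{u, v}} {γ : Type x} (x : γ) (C : Clause L γ) : Prop :=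
  TermInClause (Term.var x) C

/-- The variable `x` occurs below an extension function in the clause `C`. -/
def VarBelowExt {γ : Type x} (x : γ) (C : Clause (B.sum E) γ) : Prop :=
  ∃ u : (B.sum E).Term γ, IsExtTerm (B := B) (E := E) u ∧ TermInClause u C ∧ VarInTerm x u

/-- A clause (with universally quantified variables) is flat w.r.t. the extension symbols. -/
def ClauseFlat {γ : Type x} (C : Clause (B.sum E) γ) : Prop :=
  ∀ l ∈ C, ∀ s ∈ Lit.terms l, IsFlatTerm (B := B) (E := E) s

/-- A clause is linear w.r.t. the extension symbols. -/
def ClauseLinear {γ : Type x} (C : Clause (B.sum E) γ) : Prop :=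
  (∀ u₁ u₂ : (B.sum E).Term γ,
    IsExtTerm (B := B) (E := E) u₁ → IsExtTerm (B := B) (E := E) u₂ →
    TermInClause u₁ C → TermInClause u₂ C →
    (∃ x, VarInTerm x u₁ ∧ VarInTerm x u₂) → u₁ = u₂) ∧
  (∀ u : (B.sum E).Term γ, TermInClause u C →
    ∀ {n : ℕ} (f : E.Functions n) (ts : Fin n → (B.sum E).Term γ),
      u = Term.func (Sum.inr f) ts →
      ∀ (i j : Fin n) (x : γ), ts i = Term.var x → ts j = Term.var x → i = j)

/-- A ground term `t` (over the signature only) occurs in the clause set `K`. -/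
def GroundTermOfK (K : Set (Clause (B.sum E) ℕ)) (t : (B.sum E).Term Empty) : Prop :=
  TermInClauses (t.relabel (Empty.elim : Empty → ℕ)) K

/-- The set of ground subterms of a set of ground clauses. -/
def stSet {L : FirstOrder.Language.{u, v}} {γ : Type x} (G : Set (Clause L γ)) :
    Set (L.Term γ) :=
  {t | TermInClauses t G}

/-! ## Instances of a clause set

`instancesC K S` is `K[S]`: the set of ground instances of clauses of `K` (over constants `γ`)
in which all terms starting with an extension function symbol belong to `S`. -/
def instancesC {γ : Type x} (K : Set (Clause (B.sum E) ℕ)) (S : Set ((B.sum E).Term γ)) :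
    Set (Clause (B.sum E) γ) :=
  { D | ∃ C ∈ K, ∃ σ : ℕ → (B.sum E).Term γ,
      D = C.map (fun l => l.subst σ) ∧
      ∀ t : (B.sum E).Term γ, IsExtTerm (B := B) (E := E) t → TermInClause t D → t ∈ S }

/-- `K[T]` for a set `T` of ground (variable-free) terms, keeping the result over the
variable type `ℕ`: instances where all extension terms are ground and belong to `T`, and
variables not occurring below an extension function are left unchanged. -/
def instancesGround (K : Set (Clause (B.sum E) ℕ)) (T : Set ((B.sum E).Term Empty)) :
    Set (Clause (B.sum E) ℕ) :=
  { D | ∃ C ∈ K, ∃ σ : ℕ → (B.sum E).Term ℕ,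
      D = C.map (fun l => l.subst σ) ∧
      (∀ x : ℕ, ¬ VarBelowExt (B := B) (E := E) x C → σ x = Term.var x) ∧
      (∀ t : (B.sum E).Term ℕ, IsExtTerm (B := B) (E := E) t → TermInClause t D →
        ∃ t₀ ∈ T, t = t₀.relabel (Empty.elim : Empty → ℕ)) }

/-! ## Semantics of literals and clauses in partial structures -/

/-- All terms of the literal are defined in the partial structure. -/
def LitDefined {M : Type w} (P : PStruct B E M) {γ : Type x} (v : γ → M) :
    Lit (B.sum E) γ → Prop
  | .eq _ t₁ t₂ => (∃ x, PRealize P v t₁ x) ∧ (∃ x, PRealize P v t₂ x)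
  | .rel _ _ _ ts => ∀ i, ∃ x, PRealize P v (ts i) x

/-- The literal is defined and true in the partial structure. -/
def LitHolds {M : Type w} (P : PStruct B E M) {γ : Type x} (v : γ → M) :
    Lit (B.sum E) γ → Prop
  | .eq pos t₁ t₂ => ∃ x₁ x₂, PRealize P v t₁ x₁ ∧ PRealize P v t₂ x₂ ∧
      (if pos then x₁ = x₂ else x₁ ≠ x₂)
  | .rel pos n r ts => ∃ xs : Fin n → M, (∀ i, PRealize P v (ts i) (xs i)) ∧
      (if pos then P.relMap r xs else ¬ P.relMap r xs)

/-- Weak satisfaction of a clause in a partial structure under a valuation: either some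
literal has an undefined term, or some literal is true. -/
def WeakSatClause {M : Type w} (P : PStruct B E M) {γ : Type x} (v : γ → M)
    (D : Clause (B.sum E) γ) : Prop :=
  (∃ l ∈ D, ¬ LitDefined P v l) ∨ (∃ l ∈ D, LitHolds P v l)

/-- A weak partial model of `T₀ ∪ K`: the (total) base reduct is a model of the base theory
`T₀`, and every clause of `K` is weakly satisfied under every valuation. -/
structure WeakModel (T₀ : B.Theory) (K : Set (Clause (B.sum E) ℕ)) (M : Type w)
    (P : PStruct B E M) : Prop where
  nonempty : Nonempty M
  base : @Theory.Model B M P.bStructure T₀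
  clauses : ∀ C ∈ K, ∀ v : ℕ → M, WeakSatClause P v C

/-- A weak embedding of partial structures. -/
structure WeakEmb {M N : Type w} (P : PStruct B E M) (Q : PStruct B E N) (h : M → N) :
    Prop where
  inj : Function.Injective h
  bfun : ∀ {n : ℕ} (f : B.Functions n) (xs : Fin n → M), h (P.bfun f xs) = Q.bfun f (h ∘ xs)
  brel : ∀ {n : ℕ} (r : B.Relations n) (xs : Fin n → M), P.brel r xs ↔ Q.brel r (h ∘ xs)
  erel : ∀ {n : ℕ} (r : E.Relations n) (xs : Fin n → M), P.erel r xs ↔ Q.erel r (h ∘ xs)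
  efun : ∀ {n : ℕ} (f : E.Functions n) (xs : Fin n → M) (y : M),
      P.efun f xs = some y → Q.efun f (h ∘ xs) = some (h y)

/-- The set of defined extension terms (with the elements of `M` as constants) of a
partial structure; this is `T(A)` in the paper. -/
def definedExtTerms {M : Type w} (P : PStruct B E M) : Set ((B.sum E).Term M) :=
  { t | ∃ (n : ℕ) (f : E.Functions n) (xs : Fin n → M),
      (P.efun f xs).isSome ∧ t = Term.func (Sum.inr f) (fun i => Term.var (xs i)) }

/-- Condition `(Comp_f)`: every weak partial model of `T₀ ∪ K` (total on the base part,
with finitely many defined extension terms) weakly embeds, via the identity map,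
into a total model of `T₀ ∪ K` with the same support. -/
def CompF (T₀ : B.Theory) (K : Set (Clause (B.sum E) ℕ)) : Prop :=
  ∀ (M : Type w) (P : PStruct B E M),
    WeakModel T₀ K M P → (definedExtTerms P).Finite →
    ∃ S : (B.sum E).Structure M,
      WeakModel T₀ K M (totalize S) ∧ WeakEmb P (totalize S) (id : M → M)

open scoped Classical in
/-- The restriction `M|_T` of a total structure to a set `T` of ground terms: the extension
functions are only defined on tuples of elements named by the terms of `T`. -/
noncomputable def restrict {M : Type w} (S : (B.sum E).Structure M)
    (T : Set ((B.sum E).Term Empty)) : PStruct B E M where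
  bfun := fun {_} f xs => S.funMap (Sum.inl f) xs
  brel := fun {_} r xs => S.RelMap (Sum.inl r) xs
  erel := fun {_} r xs => S.RelMap (Sum.inr r) xs
  efun := fun {n} f xs =>
    if ∃ ts : Fin n → (B.sum E).Term Empty,
        (Term.func (Sum.inr f) ts ∈ T ∧
          ∀ i, @Term.realize (B.sum E) M S Empty (fun e => e.elim) (ts i) = xs i)
    then some (S.funMap (Sum.inr f) xs) else none

/-! ## Satisfiability of sets of ground clauses -/

/-- `A` is satisfiable w.r.t. `T₀` together with the uninterpreted extension symbols:
some total structure for the full signature whose base reduct is a model of `T₀`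
satisfies all clauses of `A` (under some interpretation of the constants `γ`). -/
def SatUIF (T₀ : B.Theory) (γ : Type w) (A : Set (Clause (B.sum E) γ)) : Prop :=
  ∃ (M : Type w) (S : (B.sum E).Structure M) (v : γ → M), Nonempty M ∧
    (@Theory.Model B M (totalize S).bStructure T₀) ∧
    ∀ D ∈ A, WeakSatClause (totalize S) v D

/-- `A` is satisfiable w.r.t. the theory extension `T₀ ∪ K`. -/
def SatExt (T₀ : B.Theory) (K : Set (Clause (B.sum E) ℕ)) (γ : Type w)
    (A : Set (Clause (B.sum E) γ)) : Prop :=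
  ∃ (M : Type w) (S : (B.sum E).Structure M) (v : γ → M), Nonempty M ∧
    (@Theory.Model B M (totalize S).bStructure T₀) ∧
    (∀ C ∈ K, ∀ w : ℕ → M, WeakSatClause (totalize S) w C) ∧
    ∀ D ∈ A, WeakSatClause (totalize S) v D

end PaperLoc


namespace PaperLoc

variable {B E : FirstOrder.Language.{u, v}}

/-- A ground term is flat: the arguments of every extension-headed subterm are constants
(nullary function symbols) of the base signature. -/
def IsFlatGroundTerm (t : (B.sum E).Term Empty) : Prop :=
  ∀ (s : (B.sum E).Term Empty), Subterm s t →
    ∀ {n : ℕ} (f : E.Functions n) (ts : Fin n → (B.sum E).Term Empty),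
      s = Term.func (Sum.inr f) ts →
      ∀ i, ∃ (c : B.Functions 0) (e : Fin 0 → (B.sum E).Term Empty),
        ts i = Term.func (Sum.inl c) e

end PaperLoc

/-! Let `C ∈ K` and let `v` be a valuation under which every term of `C` is defined in `M|_T`.
Flatness makes every extension term of `C` of the form `f(x₁,…,xₙ)`; being defined in `M|_T`,
it has ground arguments `g₁,…,gₙ` with `f(g₁,…,gₙ) ∈ T` and `gᵢ = v xᵢ` in `M`. By linearity each
variable is an argument of at most one such term, at one position, so `xᵢ ↦ gᵢ` is a well-defined
substitution `σ`. Since the `gᵢ` are base constants (the terms of `T` are flat), `Cσ ∈ K[T]`, so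
some literal of `Cσ` holds in `M`; as `σ` does not change the values of the variables, the
corresponding literal of `C` holds in `M`, hence in `M|_T`, where it is defined. -/

namespace PaperLoc

variable {B E : FirstOrder.Language.{u, v}} {M : Type w} {γ : Type x}

section PartialEvaluation

theorem PRealize.unique {P : PStruct B E M} {v : γ → M} {t : (B.sum E).Term γ} {y₁ y₂ : M}
    (h₁ : PRealize P v t y₁) (h₂ : PRealize P v t y₂) : y₁ = y₂ := by
  induction h₁ generalizing y₂ with
  | var a => cases h₂; rfl
  | bfunc f ts xs _ ih =>
    cases h₂ with
    | bfunc _ _ xs' h => rw [funext fun i => ih i (h i)]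
  | efunc f ts xs y _ hy ih =>
    cases h₂ with
    | efunc _ _ xs' y' h hy' =>
      rw [funext fun i => ih i (h i)] at hy
      exact Option.some.inj (hy.symm.trans hy')

theorem PRealize.exists_of_subterm {P : PStruct B E M} {v : γ → M} {t s : (B.sum E).Term γ}
    (hts : Subterm t s) {y : M} (hs : PRealize P v s y) : ∃ z, PRealize P v t z := by
  induction hts generalizing y with
  | refl => exact ⟨y, hs⟩
  | func f ts i _ ih =>
    cases hs with
    | bfunc _ _ xs h => exact ih (h i)
    | efunc _ _ xs _ h _ => exact ih (h i)

theorem LitDefined.exists_prealize {P : PStruct B E M} {v : γ → M} {l : Lit (B.sum E) γ}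
    (hl : LitDefined P v l) {s : (B.sum E).Term γ} (hs : s ∈ l.terms) :
    ∃ y, PRealize P v s y := by
  cases l with
  | eq pos t₁ t₂ => rcases hs with rfl | rfl; exacts [hl.1, hl.2]
  | rel pos n r ts => obtain ⟨i, rfl⟩ := hs; exact hl i

theorem exists_prealize_of_termInClause {P : PStruct B E M} {v : γ → M}
    {C : Clause (B.sum E) γ} (hC : ∀ l ∈ C, LitDefined P v l) {t : (B.sum E).Term γ}
    (ht : TermInClause t C) : ∃ y, PRealize P v t y := by
  obtain ⟨l, hl, s, hs, hts⟩ := ht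
  obtain ⟨y, hy⟩ := (hC l hl).exists_prealize hs
  exact hy.exists_of_subterm hts

end PartialEvaluation

section WeakEmbedding

variable {N : Type w} {P : PStruct B E M} {Q : PStruct B E N} {h : M → N}

theorem WeakEmb.prealize (hPQ : WeakEmb P Q h) {v : γ → M} {t : (B.sum E).Term γ} {y : M}
    (ht : PRealize P v t y) : PRealize Q (h ∘ v) t (h y) := by
  induction ht with
  | var a => exact .var a
  | bfunc f ts xs _ ih => rw [hPQ.bfun]; exact .bfunc f ts _ ih
  | efunc f ts xs y _ hy ih => exact .efunc f ts _ _ ih (hPQ.efun f xs y hy)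

theorem WeakEmb.relMap_iff (hPQ : WeakEmb P Q h) {n : ℕ} (r : (B.sum E).Relations n)
    (xs : Fin n → M) : P.relMap r xs ↔ Q.relMap r (h ∘ xs) := by
  cases r with
  | inl r => exact hPQ.brel r xs
  | inr r => exact hPQ.erel r xs

theorem WeakEmb.litHolds (hPQ : WeakEmb P Q h) {v : γ → M} {l : Lit (B.sum E) γ}
    (hdef : LitDefined P v l) (hl : LitHolds Q (h ∘ v) l) : LitHolds P v l := by
  cases l with
  | eq pos t₁ t₂ =>
    obtain ⟨x₁, x₂, h₁, h₂, hx⟩ := hl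
    obtain ⟨⟨y₁, hy₁⟩, ⟨y₂, hy₂⟩⟩ := hdef
    obtain rfl := (hPQ.prealize hy₁).unique h₁
    obtain rfl := (hPQ.prealize hy₂).unique h₂
    cases pos
    · exact ⟨y₁, y₂, hy₁, hy₂, fun hy => hx (congrArg h hy)⟩
    · exact ⟨y₁, y₂, hy₁, hy₂, hPQ.inj hx⟩
  | rel pos n r ts =>
    obtain ⟨xs, hxs, hx⟩ := hl
    choose ys hys using hdef
    obtain rfl : h ∘ ys = xs := funext fun i => (hPQ.prealize (hys i)).unique (hxs i)
    refine ⟨ys, hys, ?_⟩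
    cases pos
    · exact mt (hPQ.relMap_iff r ys).1 hx
    · exact (hPQ.relMap_iff r ys).2 hx

end WeakEmbedding

section Totalize

variable {S : (B.sum E).Structure M}

theorem prealize_totalize_iff {v : γ → M} {t : (B.sum E).Term γ} {y : M} :
    PRealize (totalize S) v t y ↔ y = t.realize v := by
  constructor
  · intro ht
    induction ht with
    | var a => rfl
    | bfunc f ts xs _ ih => exact congrArg (S.funMap (Sum.inl f)) (funext ih)
    | efunc f ts xs y _ hy ih =>
      rw [← Option.some.inj hy]
      exact congrArg (S.funMap (Sum.inr f)) (funext ih)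
  · rintro rfl
    induction t with
    | var a => exact .var a
    | func f ts ih =>
      cases f with
      | inl f => exact .bfunc f ts _ ih
      | inr f => exact .efunc f ts _ _ ih rfl

theorem litDefined_totalize (v : γ → M) (l : Lit (B.sum E) γ) :
    LitDefined (totalize S) v l := by
  cases l with
  | eq pos t₁ t₂ => exact ⟨⟨_, prealize_totalize_iff.2 rfl⟩, ⟨_, prealize_totalize_iff.2 rfl⟩⟩
  | rel pos n r ts => exact fun i => ⟨_, prealize_totalize_iff.2 rfl⟩

theorem litHolds_totalize_of_subst {δ : Type y} {v : δ → M} {σ : γ → (B.sum E).Term δ}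
    {w : γ → M} (hσ : ∀ x, (σ x).realize v = w x) {l : Lit (B.sum E) γ}
    (hl : LitHolds (totalize S) v (l.subst σ)) : LitHolds (totalize S) w l := by
  have hw : ∀ t : (B.sum E).Term γ, (t.subst σ).realize v = t.realize w := fun t => by
    rw [Term.realize_subst, funext hσ]
  cases l with
  | eq pos t₁ t₂ =>
    obtain ⟨x₁, x₂, h₁, h₂, hx⟩ := hl
    rw [prealize_totalize_iff, hw] at h₁ h₂
    exact ⟨x₁, x₂, prealize_totalize_iff.2 h₁, prealize_totalize_iff.2 h₂, hx⟩
  | rel pos n r ts =>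
    obtain ⟨xs, hxs, hx⟩ := hl
    refine ⟨xs, fun i => prealize_totalize_iff.2 ?_, hx⟩
    rw [← hw]
    exact prealize_totalize_iff.1 (hxs i)

end Totalize

section Restrict

variable {S : (B.sum E).Structure M} {T : Set ((B.sum E).Term Empty)}

theorem restrict_efun_eq_some {n : ℕ} {f : E.Functions n} {xs : Fin n → M} {y : M}
    (h : (restrict S T).efun f xs = some y) :
    y = S.funMap (Sum.inr f) xs ∧ ∃ gs : Fin n → (B.sum E).Term Empty,
      Term.func (Sum.inr f) gs ∈ T ∧ ∀ i, (gs i).realize (fun e => e.elim) = xs i := by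
  dsimp only [restrict] at h
  split_ifs at h with hgs
  exact ⟨(Option.some.inj h).symm, hgs⟩

theorem restrict_weakEmb (S : (B.sum E).Structure M) (T : Set ((B.sum E).Term Empty)) :
    WeakEmb (restrict S T) (totalize S) id where
  inj := Function.injective_id
  bfun _ _ := rfl
  brel _ _ := Iff.rfl
  erel _ _ := Iff.rfl
  efun _ _ _ h := by rw [(restrict_efun_eq_some h).1]; rfl

theorem exists_mem_of_prealize_restrict {v : γ → M} {n : ℕ} {f : E.Functions n}
    {ts : Fin n → (B.sum E).Term γ} {y : M}
    (h : PRealize (restrict S T) v (Term.func (Sum.inr f) ts) y) :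
    ∃ gs : Fin n → (B.sum E).Term Empty, Term.func (Sum.inr f) gs ∈ T ∧
      ∀ i, (gs i).realize (fun e => e.elim) = (ts i).realize v := by
  cases h with
  | efunc _ _ xs _ hxs hy =>
    obtain ⟨-, gs, hgs, hval⟩ := restrict_efun_eq_some hy
    refine ⟨gs, hgs, fun i => ?_⟩
    rw [hval]
    exact prealize_totalize_iff.1 ((restrict_weakEmb S T).prealize (hxs i))

end Restrict

section Substitution

theorem NoExt.relabel {δ : Type y} {t : (B.sum E).Term γ} (ht : NoExt t) (g : γ → δ) :
    NoExt (t.relabel g) := by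
  induction ht with
  | var a => exact .var (g a)
  | func f ts _ ih => exact .func f _ ih

theorem NoExt.not_isExtTerm_of_subterm {t s : (B.sum E).Term γ} (hts : Subterm t s)
    (hs : NoExt s) : ¬ IsExtTerm (B := B) (E := E) t := by
  induction hts with
  | refl => cases hs <;> exact id
  | func f ts i _ ih => cases hs with | func _ _ h => exact ih (h i)

theorem IsFlatGroundTerm.noExt_arg {n : ℕ} {f : E.Functions n}
    {gs : Fin n → (B.sum E).Term Empty}
    (h : IsFlatGroundTerm (B := B) (E := E) (Term.func (Sum.inr f) gs)) (i : Fin n) :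
    NoExt (gs i) := by
  obtain ⟨c, e, he⟩ := h _ (.refl _) f gs rfl i
  rw [he]
  exact .func c e finZeroElim

theorem Lit.terms_subst {δ : Type y} (l : Lit (B.sum E) γ) (σ : γ → (B.sum E).Term δ) :
    (l.subst σ).terms = (Term.subst · σ) '' l.terms := by
  cases l with
  | eq pos t₁ t₂ => exact (Set.image_pair (Term.subst · σ) t₁ t₂).symm
  | rel pos n r ts => exact Set.range_comp (Term.subst · σ) ts

theorem subterm_subst_of_isExtTerm {δ : Type y} {σ : γ → (B.sum E).Term δ}
    {t : (B.sum E).Term δ} (ht : IsExtTerm (B := B) (E := E) t) {s : (B.sum E).Term γ}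
    (h : Subterm t (s.subst σ)) :
    (∃ s₁, Subterm s₁ s ∧ IsExtTerm (B := B) (E := E) s₁ ∧ t = s₁.subst σ) ∨
      ∃ x, Subterm t (σ x) := by
  induction s with
  | var a => exact .inr ⟨a, h⟩
  | func g ts ih =>
    cases h with
    | refl => exact .inl ⟨_, .refl _, by cases g <;> exact ht, rfl⟩
    | func _ _ i h =>
      rcases ih i h with ⟨s₁, hs₁, hext, rfl⟩ | hσ
      · exact .inl ⟨s₁, .func g ts i hs₁, hext, rfl⟩
      · exact .inr hσ

theorem termInClause_map_subst {δ : Type y} {σ : γ → (B.sum E).Term δ}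
    {C : Clause (B.sum E) γ} {t : (B.sum E).Term δ} (ht : IsExtTerm (B := B) (E := E) t)
    (htC : TermInClause t (C.map (Lit.subst · σ))) :
    (∃ s, TermInClause s C ∧ IsExtTerm (B := B) (E := E) s ∧ t = s.subst σ) ∨
      ∃ x, Subterm t (σ x) := by
  obtain ⟨_, hlσ, _, hs, hts⟩ := htC
  obtain ⟨l, hl, rfl⟩ := List.mem_map.1 hlσ
  rw [Lit.terms_subst] at hs
  obtain ⟨s, hs, rfl⟩ := hs
  rcases subterm_subst_of_isExtTerm ht hts with ⟨s₁, hs₁, hext, rfl⟩ | hσ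
  · exact .inl ⟨s₁, ⟨l, hl, s, hs, hs₁⟩, hext, rfl⟩
  · exact .inr hσ

end Substitution

section FlatLinear

abbrev flatExtTerm {n : ℕ} (f : E.Functions n) (xs : Fin n → γ) : (B.sum E).Term γ :=
  Term.func (Sum.inr f) fun i => Term.var (xs i)

variable {C : Clause (B.sum E) γ}

theorem ClauseFlat.exists_eq_flatExtTerm (hC : ClauseFlat (B := B) (E := E) C)
    {s : (B.sum E).Term γ} (hsC : TermInClause s C) (hs : IsExtTerm (B := B) (E := E) s) :
    ∃ (n : ℕ) (f : E.Functions n) (xs : Fin n → γ), s = flatExtTerm f xs := by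
  obtain ⟨l, hl, s', hs', hss'⟩ := hsC
  match s, hs with
  | Term.func (Sum.inr f) ts, _ =>
    choose xs hxs using hC l hl s' hs' _ hss' f ts rfl
    exact ⟨_, f, xs, congrArg _ (funext hxs)⟩

theorem varBelowExt_of_termInClause {n : ℕ} {f : E.Functions n} {xs : Fin n → γ}
    (h : TermInClause (flatExtTerm (B := B) f xs) C) (i : Fin n) : VarBelowExt (xs i) C :=
  ⟨flatExtTerm f xs, trivial, h, .func _ _ i (.refl _)⟩

theorem ClauseLinear.sigma_eq_of_arg_eq (hC : ClauseLinear (B := B) (E := E) C)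
    {n n' : ℕ} {f : E.Functions n} {f' : E.Functions n'} {xs : Fin n → γ} {xs' : Fin n' → γ}
    {i : Fin n} {i' : Fin n'} (h : TermInClause (flatExtTerm (B := B) f xs) C)
    (h' : TermInClause (flatExtTerm (B := B) f' xs') C) (hx : xs i = xs' i') :
    (⟨n, f, xs, i⟩ : Σ n, E.Functions n × (Fin n → γ) × Fin n) = ⟨n', f', xs', i'⟩ := by
  have heq : flatExtTerm (B := B) f xs = flatExtTerm f' xs' :=
    hC.1 (flatExtTerm f xs) (flatExtTerm f' xs') trivial trivial h h' ⟨xs i, .func _ _ i (.refl _), hx ▸ .func _ _ i' (.refl _)⟩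
  obtain ⟨rfl, hf, hxs⟩ := Term.func.inj heq
  obtain rfl := Sum.inr_injective (eq_of_heq hf)
  obtain rfl : xs = xs' := funext fun j => Term.var.inj (congrFun (eq_of_heq hxs) j)
  obtain rfl : i = i' := hC.2 _ h f _ rfl i i' (xs i) rfl (congrArg Term.var hx.symm)
  rfl

/-- Linearity makes each variable below an extension symbol an argument of exactly one
extension term, at exactly one position, so terms prescribed for the argument positions glue
to a substitution. -/
theorem ClauseLinear.exists_subst (hC : ClauseLinear (B := B) (E := E) C)
    (a : ∀ {n : ℕ} (f : E.Functions n) (xs : Fin n → γ),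
      TermInClause (flatExtTerm (B := B) f xs) C → Fin n → (B.sum E).Term γ)
    (p : γ → (B.sum E).Term γ → Prop) (hp_var : ∀ x, p x (Term.var x))
    (hp_a : ∀ {n : ℕ} (f : E.Functions n) xs h (i : Fin n), p (xs i) (a f xs h i)) :
    ∃ σ : γ → (B.sum E).Term γ, (∀ x, ¬ VarBelowExt (B := B) (E := E) x C → σ x = Term.var x) ∧
      (∀ x, p x (σ x)) ∧ ∀ {n : ℕ} (f : E.Functions n) xs h (i : Fin n), σ (xs i) = a f xs h i := by
  have hσ : ∀ x, ∃ t, (¬ VarBelowExt (B := B) (E := E) x C → t = Term.var x) ∧ p x t ∧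
      ∀ (n : ℕ) (f : E.Functions n) xs h (i : Fin n), xs i = x → t = a f xs h i := by
    intro x
    by_cases hx : ∃ (n : ℕ) (f : E.Functions n) (xs : Fin n → γ)
        (h : TermInClause (flatExtTerm (B := B) f xs) C) (i : Fin n), xs i = x
    · obtain ⟨n, f, xs, h, i, rfl⟩ := hx
      refine ⟨a f xs h i, fun hx => (hx (varBelowExt_of_termInClause h i)).elim, hp_a f xs h i,
        fun n' f' xs' h' i' hi' => ?_⟩
      cases hC.sigma_eq_of_arg_eq h h' hi'.symm
      rfl
    · exact ⟨Term.var x, fun _ => rfl, hp_var x,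
        fun n f xs h i hi => (hx ⟨n, f, xs, h, i, hi⟩).elim⟩
  choose σ hσ_var hσ_p hσ_a using hσ
  exact ⟨σ, hσ_var, hσ_p, fun f xs h i => hσ_a _ _ f xs h i rfl⟩

end FlatLinear

theorem exists_subst_mem_instancesGround {S : (B.sum E).Structure M}
    {T : Set ((B.sum E).Term Empty)} (hT : ∀ t ∈ T, IsFlatGroundTerm (B := B) (E := E) t)
    {K : Set (Clause (B.sum E) ℕ)} {C : Clause (B.sum E) ℕ} (hCK : C ∈ K)
    (hflat : ClauseFlat (B := B) (E := E) C) (hlin : ClauseLinear (B := B) (E := E) C)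
    {v : ℕ → M} (hdef : ∀ l ∈ C, LitDefined (restrict S T) v l) :
    ∃ σ : ℕ → (B.sum E).Term ℕ, (∀ x, (σ x).realize v = v x) ∧
      C.map (Lit.subst · σ) ∈ instancesGround (B := B) (E := E) K T := by
  have hground : ∀ (n : ℕ) (f : E.Functions n) (xs : Fin n → ℕ),
      TermInClause (flatExtTerm (B := B) f xs) C → ∃ gs : Fin n → (B.sum E).Term Empty,
        Term.func (Sum.inr f) gs ∈ T ∧ ∀ i, (gs i).realize (fun e => e.elim) = v (xs i) :=
    fun _ _ _ h => by
      obtain ⟨_, hy⟩ := exists_prealize_of_termInClause hdef h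
      exact exists_mem_of_prealize_restrict hy
  choose gs hgsT hgsv using hground
  obtain ⟨σ, hσ_var, hσ_p, hσ_gs⟩ := hlin.exists_subst
    (fun f xs h i => (gs _ f xs h i).relabel Empty.elim)
    (fun x t => NoExt t ∧ t.realize v = v x) (fun x => ⟨.var x, rfl⟩)
    (fun f xs h i => ⟨((hT _ (hgsT _ f xs h)).noExt_arg i).relabel _, by
      rw [Term.realize_relabel, Subsingleton.elim (v ∘ Empty.elim) fun e => e.elim]
      exact hgsv _ f xs h i⟩)
  refine ⟨σ, fun x => (hσ_p x).2, C, hCK, σ, rfl, hσ_var, fun t ht htC => ?_⟩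
  rcases termInClause_map_subst ht htC with ⟨s, hsC, hs, rfl⟩ | ⟨x, hx⟩
  · obtain ⟨n, f, xs, rfl⟩ := hflat.exists_eq_flatExtTerm hsC hs
    exact ⟨_, hgsT _ f xs hsC,
      congrArg (Term.func (L := B.sum E) (Sum.inr f)) (funext (hσ_gs f xs hsC))⟩
  · exact absurd ht ((hσ_p x).1.not_isExtTerm_of_subterm hx)

end PaperLoc

theorem statement_12_general (B0 E : FirstOrder.Language.{u, v}) (T₀ : B0.Theory)
    (K : Set (PaperLoc.Clause (B0.sum E) ℕ))
    (hKflat : ∀ C ∈ K, PaperLoc.ClauseFlat (B := B0) (E := E) C ∧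
      PaperLoc.ClauseLinear (B := B0) (E := E) C)
    (T : Set ((B0.sum E).Term Empty))
    (hflatT : ∀ t ∈ T, PaperLoc.IsFlatGroundTerm (B := B0) (E := E) t)
    (M : Type w) (S : (B0.sum E).Structure M)
    (hM : PaperLoc.WeakModel T₀ (PaperLoc.instancesGround (B := B0) (E := E) K T) M
      (PaperLoc.totalize S)) :
    PaperLoc.WeakModel T₀ K M (PaperLoc.restrict S T) := by
  refine ⟨hM.nonempty, hM.base, fun C hC v => ?_⟩
  by_cases hdef : ∀ l ∈ C, PaperLoc.LitDefined (PaperLoc.restrict S T) v l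
  · obtain ⟨σ, hσ, hCσ⟩ :=
      PaperLoc.exists_subst_mem_instancesGround hflatT hC (hKflat C hC).1 (hKflat C hC).2 hdef
    rcases hM.clauses _ hCσ v with ⟨l, -, hl⟩ | ⟨l, hl, hlσ⟩
    · exact absurd (PaperLoc.litDefined_totalize v l) hl
    · obtain ⟨l, hlC, rfl⟩ := List.mem_map.1 hl
      exact .inr ⟨l, hlC, (PaperLoc.restrict_weakEmb S T).litHolds (hdef l hlC)
        (PaperLoc.litHolds_totalize_of_subst hσ hlσ)⟩
  · push Not at hdef
    exact .inl hdef

/-- if `K` is a set of flat and linear clauses, `T` a finite subterm-closed set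
of flat ground terms containing the ground terms of `K`, and `M` a total model of
`T₀ ∪ K[T]`, then the restriction `M|_T` is a weak partial model of `T₀ ∪ K`. -/
theorem statement_12 (B0 E : FirstOrder.Language.{u, v}) (T₀ : B0.Theory)
    (K : Set (PaperLoc.Clause (B0.sum E) ℕ))
    (hKflat : ∀ C ∈ K, PaperLoc.ClauseFlat (B := B0) (E := E) C ∧
      PaperLoc.ClauseLinear (B := B0) (E := E) C)
    (T : Set ((B0.sum E).Term Empty)) (hfin : T.Finite)
    (hflatT : ∀ t ∈ T, PaperLoc.IsFlatGroundTerm (B := B0) (E := E) t)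
    (hsub : ∀ t s : (B0.sum E).Term Empty, s ∈ T → PaperLoc.Subterm t s → t ∈ T)
    (hK : ∀ t : (B0.sum E).Term Empty, PaperLoc.GroundTermOfK (B := B0) (E := E) K t → t ∈ T)
    (M : Type w) (S : (B0.sum E).Structure M)
    (hM : PaperLoc.WeakModel T₀ (PaperLoc.instancesGround (B := B0) (E := E) K T) M
      (PaperLoc.totalize S)) :
    PaperLoc.WeakModel T₀ K M (PaperLoc.restrict S T) :=
  statement_12_general B0 E T₀ K hKflat T hflatT M S hM
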